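/- Fix n ≥ 2 and a nonzero commutative ring A. Let D = {m ∈ ℕ^{n−1} : m_1 ≥ m_2 ≥ … ≥ m_{n−1}} be the set of dominant tuples. For each nonempty subset I ⊆ {1,…,n−1} fix a unit c_I ∈ A^×. For j = 1,…,n−1 define an A-linear operator T_j on the A-module of functions a : D → A by (T_j a)(m) = Σ_{I ⊆ {1,…,n−1}, |I| = j} c_I · a(m + e_I), where e_I denotes the indicator vector of I, and where by convention a(m + e_I) = 0 whenever m + e_I is not dominant. Then a function a : D → A lies in the common kernel of T_1, …, T_{n−1} if and only if a(m) = 0 for all m ≠ 0. In particular, the common kernel is a free A-module of rank one, spanned by the delta function at 0. -/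

import Mathlib

/-!
Induct along the lexicographic order on dominant tuples. For a dominant `m ≠ 0`, let `B` be the
block of leading coordinates where `m` attains its maximum, so `m = m' + e_B` with `m'` dominant.
Then `0 = T_{|B|} a (m') = c_B a(m) + ∑_{J ≠ B} c_J a(m' + e_J)`, and since `B` is an initial
segment, every `m' + e_J` with `|J| = |B|`, `J ≠ B` is lexicographically smaller than `m`, so the
sum vanishes by induction and `a(m) = 0` because `c_B` is a unit.
-/

/-- The set of dominant (weakly decreasing) tuples in `ℕ^d`. -/
def domSet (d : ℕ) : Set (Fin d → ℕ) := {m | Antitone m}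

/-- The indicator vector of a subset `I ⊆ {1,…,d}`. -/
def eI {d : ℕ} (I : Finset (Fin d)) : Fin d → ℕ := fun i => if i ∈ I then 1 else 0

open Classical in
/-- The Atkin–Lehner style operator `T_j` on functions on dominant tuples:
`(T_j a)(m) = ∑_{|I| = j} c_I · a(m + e_I)`, with `a` extended by zero off the
dominant set. -/
noncomputable def ALop (d : ℕ) (A : Type*) [CommRing A] (c : Finset (Fin d) → Aˣ)
    (j : ℕ) (a : domSet d → A) : domSet d → A :=
  fun m => ∑ I ∈ Finset.powersetCard j (Finset.univ : Finset (Fin d)),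
    (c I : A) * (if h : (m.1 + eI I) ∈ domSet d then a ⟨m.1 + eI I, h⟩ else 0)

open Finset

theorem zero_mem_domSet (d : ℕ) : (0 : Fin d → ℕ) ∈ domSet d := antitone_const

theorem add_eI_ne_zero {d : ℕ} (m : Fin d → ℕ) {I : Finset (Fin d)} (hI : I.Nonempty) :
    m + eI I ≠ 0 := by
  obtain ⟨i, hi⟩ := hI
  intro h
  simpa [eI, hi] using congrFun h i

theorem toLex_eI_lt_of_isLowerSet {d : ℕ} {B J : Finset (Fin d)}
    (hB : IsLowerSet (B : Set (Fin d))) (hcard : #J = #B) (hne : J ≠ B) :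
    toLex (eI J) < toLex (eI B) := by
  have hdiff : (B \ J).Nonempty :=
    sdiff_nonempty.2 fun hBJ => hne (eq_of_subset_of_card_le hBJ hcard.le).symm
  obtain ⟨hkB, hkJ⟩ := mem_sdiff.1 ((B \ J).min'_mem hdiff)
  refine ⟨(B \ J).min' hdiff, fun i hik => ?_, by simp [eI, hkB, hkJ]⟩
  have hiB : i ∈ B := hB hik.le hkB
  have hiJ : i ∈ J := by
    by_contra hiJ
    exact (min'_le _ _ (mem_sdiff.2 ⟨hiB, hiJ⟩)).not_gt hik
  simp [eI, hiB, hiJ]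

theorem antitone_sub_eI {d : ℕ} {m : Fin d → ℕ} (hm : Antitone m) {B : Finset (Fin d)}
    (hB : IsLowerSet (B : Set (Fin d))) (hgap : ∀ i ∈ B, ∀ k ∉ B, m k < m i) :
    Antitone (m - eI B) := by
  intro i k hik
  have := hm hik
  by_cases hk : k ∈ B
  · have hi : i ∈ B := hB hik (mem_coe.2 hk)
    simp only [Pi.sub_apply, eI, hi, hk, if_true]
    omega
  by_cases hi : i ∈ B
  · have := hgap i hi k hk
    simp only [Pi.sub_apply, eI, hi, hk, if_true, if_false]
    omega
  · simp only [Pi.sub_apply, eI, hi, hk, if_false]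
    omega

theorem exists_eq_add_eI_of_antitone {d : ℕ} {m : Fin d → ℕ} (hm : Antitone m) (h0 : m ≠ 0) :
    ∃ B : Finset (Fin d), B.Nonempty ∧ IsLowerSet (B : Set (Fin d)) ∧
      ∃ m' : Fin d → ℕ, Antitone m' ∧ m = m' + eI B := by
  obtain ⟨i₀, hi₀⟩ : ∃ i, m i ≠ 0 := by
    by_contra! h
    exact h0 (funext h)
  obtain ⟨t, -, ht⟩ := exists_max_image univ m ⟨i₀, mem_univ _⟩
  have hle : ∀ i, m i ≤ m t := fun i => ht i (mem_univ _)
  set B := univ.filter fun i => m i = m t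
  have hmem : ∀ i, i ∈ B ↔ m i = m t := by simp [B]
  have hlow : IsLowerSet (B : Set (Fin d)) := fun k i hik hk =>
    (hmem i).2 (le_antisymm (hle i) ((hmem k).1 hk ▸ hm hik))
  have hgap : ∀ i ∈ B, ∀ k ∉ B, m k < m i := fun i hi k hk =>
    (hmem i).1 hi ▸ (hle k).lt_of_ne ((hmem k).not.1 hk)
  have hpos : eI B ≤ m := fun i => by
    by_cases hi : i ∈ B
    · have := (hmem i).1 hi
      have := hle i₀
      simp only [eI, hi, if_true]
      omega
    · simp [eI, hi]
  exact ⟨B, ⟨t, (hmem t).2 rfl⟩, hlow, m - eI B, antitone_sub_eI hm hlow hgap,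
    (tsub_add_cancel_of_le hpos).symm⟩

theorem ALop_eq_zero_of_forall_ne_zero {d : ℕ} {A : Type*} [CommRing A]
    (c : Finset (Fin d) → Aˣ) {a : domSet d → A} (ha : ∀ m : domSet d, m.1 ≠ 0 → a m = 0)
    {j : ℕ} (hj : 1 ≤ j) (m : domSet d) : ALop d A c j a m = 0 := by
  refine sum_eq_zero fun I hI => ?_
  have hI : I.Nonempty := card_pos.1 ((mem_powersetCard_univ.1 hI).symm ▸ hj)
  split_ifs with h
  · rw [ha _ (add_eI_ne_zero m.1 hI), mul_zero]
  · exact mul_zero _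

theorem eq_zero_of_forall_ALop_eq_zero {d : ℕ} {A : Type*} [CommRing A]
    {c : Finset (Fin d) → Aˣ} {a : domSet d → A}
    (hker : ∀ j : ℕ, 1 ≤ j → j ≤ d → ∀ m : domSet d, ALop d A c j a m = 0)
    (m : domSet d) : m.1 ≠ 0 → a m = 0 := by
  induction m using (InvImage.wf (fun m : domSet d => toLex m.1) wellFounded_lt).induction with
  | _ m ih =>
  intro hm0
  obtain ⟨B, hBne, hBlow, m', hm', hm⟩ := exists_eq_add_eI_of_antitone m.2 hm0
  have hB : #B ∈ Set.Icc 1 d := ⟨hBne.card_pos, (card_le_univ B).trans (by simp)⟩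
  have hsum := hker #B hB.1 hB.2 ⟨m', hm'⟩
  rw [ALop, sum_eq_single_of_mem B (mem_powersetCard_univ.2 rfl), dif_pos (hm ▸ m.2)] at hsum
  · rw [show (⟨m' + eI B, _⟩ : domSet d) = m from Subtype.ext hm.symm] at hsum
    exact (c B).mul_right_eq_zero.1 hsum
  intro J hJ hJB
  have hJcard := mem_powersetCard_univ.1 hJ
  split_ifs with hdom
  · have hlt : toLex (m' + eI J) < toLex m.1 := by
      rw [hm]
      exact add_lt_add_right (toLex_eI_lt_of_isLowerSet hBlow hJcard hJB) (toLex m')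
    rw [ih ⟨_, hdom⟩ hlt (add_eI_ne_zero m' (card_pos.1 (hJcard ▸ hB.1))), mul_zero]
  · exact mul_zero _

theorem forall_ALop_eq_zero_iff {d : ℕ} {A : Type*} [CommRing A]
    {c : Finset (Fin d) → Aˣ} {a : domSet d → A} :
    (∀ j : ℕ, 1 ≤ j → j ≤ d → ∀ m : domSet d, ALop d A c j a m = 0) ↔
      ∀ m : domSet d, m.1 ≠ 0 → a m = 0 :=
  ⟨eq_zero_of_forall_ALop_eq_zero, fun ha _ hj _ => ALop_eq_zero_of_forall_ne_zero c ha hj⟩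

theorem forall_ne_zero_eq_zero_iff_exists_eq_ite {X A : Type*} [Zero X] [DecidableEq X] [Zero A]
    {s : Set X} (h0 : 0 ∈ s) (a : s → A) :
    (∀ x : s, x.1 ≠ 0 → a x = 0) ↔ ∃ t : A, a = fun x => if x.1 = 0 then t else 0 := by
  constructor
  · intro ha
    refine ⟨a ⟨0, h0⟩, funext fun x => ?_⟩
    split_ifs with hx
    · exact congrArg a (Subtype.ext hx)
    · exact ha x hx
  · rintro ⟨t, ht⟩ x hx
    simp [ht, hx]

theorem common_kernel_of_AL_operators_general
    (d : ℕ) (A : Type*) [CommRing A]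
    (c : Finset (Fin d) → Aˣ) (a : domSet d → A) :
    ((∀ j : ℕ, 1 ≤ j → j ≤ d → ∀ m : domSet d, ALop d A c j a m = 0) ↔
      (∀ m : domSet d, m.1 ≠ 0 → a m = 0)) ∧
    ((∀ j : ℕ, 1 ≤ j → j ≤ d → ∀ m : domSet d, ALop d A c j a m = 0) ↔
      (∃ t : A, a = fun m => if m.1 = 0 then t else 0)) := by
  rw [← forall_ne_zero_eq_zero_iff_exists_eq_ite (zero_mem_domSet d), and_self]
  exact forall_ALop_eq_zero_iff

/-- a function `a` on dominant tuples lies in the common kernel of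
`T_1, …, T_d` iff `a` vanishes off `0`; in particular the common kernel is free of rank
one over `A`, spanned by the delta function at `0`. -/
theorem common_kernel_of_AL_operators
    (d : ℕ) (hd : 1 ≤ d) (A : Type*) [CommRing A] [Nontrivial A]
    (c : Finset (Fin d) → Aˣ) (a : domSet d → A) :
    ((∀ j : ℕ, 1 ≤ j → j ≤ d → ∀ m : domSet d, ALop d A c j a m = 0) ↔
      (∀ m : domSet d, m.1 ≠ 0 → a m = 0)) ∧
    ((∀ j : ℕ, 1 ≤ j → j ≤ d → ∀ m : domSet d, ALop d A c j a m = 0) ↔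
      (∃ t : A, a = fun m => if m.1 = 0 then t else 0)) :=
  common_kernel_of_AL_operators_general d A c a
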